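/- arXiv:1809.08329 — 2 statements merged into one kernel-verified Lean document; each statement's English description precedes it below -/
import Mathlib

section
/- Under the hypotheses of the Mirror Descent lemma, if additionally $f$ is convex, then for every $x \in Q$: $h(f(y) - f(x)) \leq \frac{h^2}{2}\|\nabla f(y)\|_*^2 + V(y, x) - V(z, x)$, where $z = \mathrm{Mirr}_y(h\nabla f(y))$. -/
/-!
By convexity, `h (f y - f x) ≤ h p (y - x) = h p (y - z) + h p (z - x)`. The first-order optimality
condition of the mirror step `z`, rewritten with the three-point identity of the Bregman divergence,
gives `h p (z - x) ≤ V y x - V z x - V y z`. Young's inequality gives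
`h p (y - z) ≤ h² ‖p‖² / 2 + ‖z - y‖² / 2`, and the last term is absorbed by `V y z ≥ ‖z - y‖² / 2`,
which is the strong convexity of `d`.
-/

open Set

section Bregman

variable {E : Type*} [NormedAddCommGroup E] [NormedSpace ℝ E]

noncomputable def bregmanDiv (d : E → ℝ) (D : E → E →L[ℝ] ℝ) (u v : E) : ℝ :=
  d v - d u - D u (v - u)

theorem bregmanDiv_three_point (d : E → ℝ) (D : E → E →L[ℝ] ℝ) (x y z : E) :
    bregmanDiv d D y x - bregmanDiv d D z x - bregmanDiv d D y z = (D z - D y) (x - z) := by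
  simp only [bregmanDiv, sub_apply, map_sub]
  ring

theorem hasFDerivAt_bregmanDiv {d : E → ℝ} {D : E → E →L[ℝ] ℝ} {z : E}
    (hd : HasFDerivAt d (D z) z) (y : E) :
    HasFDerivAt (bregmanDiv d D y) (D z - D y) z := by
  have hlin : HasFDerivAt (fun v => D y (v - y)) (D y) z :=
    (D y).hasFDerivAt.comp z ((hasFDerivAt_id z).sub_const y)
  exact (hd.sub_const (d y)).sub hlin

section StrongConvexity

variable {Q : Set E} {d : E → ℝ} {D : E → E →L[ℝ] ℝ}

theorem hasDerivAt_comp_add_smul (hQ : Convex ℝ Q) (hdiff : ∀ w ∈ Q, HasFDerivAt d (D w) w)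
    {a b : E} (ha : a ∈ Q) (hb : b ∈ Q) {t : ℝ} (ht : t ∈ Icc (0 : ℝ) 1) :
    HasDerivAt (fun s : ℝ => d (a + s • (b - a))) (D (a + t • (b - a)) (b - a)) t := by
  have hmem : a + t • (b - a) ∈ Q :=
    hQ.segment_subset ha hb ((segment_eq_image' ℝ a b).symm ▸ ⟨t, ht, rfl⟩)
  have hline : HasDerivAt (fun s : ℝ => a + s • (b - a)) (b - a) t := by
    simpa using ((hasDerivAt_id t).smul_const (b - a)).const_add a
  exact (hdiff _ hmem).comp_hasDerivAt t hline

/-- Along the segment from `a` to `b`, the function `d (a + t (b - a)) - t D a (b - a)` has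
derivative at least `μ t ‖b - a‖²`, so it grows by at least `μ ‖b - a‖² / 2` on `[0, 1]`. -/
theorem mul_sq_norm_le_bregmanDiv (hQ : Convex ℝ Q) (hdiff : ∀ w ∈ Q, HasFDerivAt d (D w) w)
    {μ : ℝ} (hstr : ∀ u ∈ Q, ∀ v ∈ Q, μ * ‖u - v‖ ^ 2 ≤ (D u - D v) (u - v))
    {a b : E} (ha : a ∈ Q) (hb : b ∈ Q) :
    μ / 2 * ‖b - a‖ ^ 2 ≤ bregmanDiv d D a b := by
  set c : ℝ → E := fun t => a + t • (b - a)
  set g : ℝ → ℝ := fun t => d (c t) - t * D a (b - a) - μ * (t ^ 2 / 2) * ‖b - a‖ ^ 2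
  have hg : ∀ t ∈ Icc (0 : ℝ) 1,
      HasDerivAt g (D (c t) (b - a) - D a (b - a) - μ * t * ‖b - a‖ ^ 2) t := by
    intro t ht
    have hquad : HasDerivAt (fun s : ℝ => μ * (s ^ 2 / 2) * ‖b - a‖ ^ 2) (μ * t * ‖b - a‖ ^ 2) t := by
      simpa using (((hasDerivAt_pow 2 t).div_const 2).const_mul μ).mul_const (‖b - a‖ ^ 2)
    have hlin : HasDerivAt (fun s : ℝ => s * D a (b - a)) (D a (b - a)) t := by
      simpa using (hasDerivAt_id t).mul_const (D a (b - a))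
    exact ((hasDerivAt_comp_add_smul hQ hdiff ha hb ht).sub hlin).sub hquad
  have hg_nonneg : ∀ t ∈ Ioo (0 : ℝ) 1,
      0 ≤ D (c t) (b - a) - D a (b - a) - μ * t * ‖b - a‖ ^ 2 := by
    rintro t ⟨ht0, ht1⟩
    have hct : c t ∈ Q :=
      hQ.segment_subset ha hb ((segment_eq_image' ℝ a b).symm ▸ ⟨t, ⟨ht0.le, ht1.le⟩, rfl⟩)
    have hs := hstr (c t) hct a ha
    simp only [c, add_sub_cancel_left, norm_smul, map_smul, smul_eq_mul, Real.norm_eq_abs,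
      mul_pow, sq_abs, sub_apply] at hs
    nlinarith
  have hmono : MonotoneOn g (Icc 0 1) := by
    refine monotoneOn_of_deriv_nonneg (convex_Icc 0 1)
      (fun t ht => (hg t ht).continuousAt.continuousWithinAt) (fun t ht => ?_) (fun t ht => ?_)
    all_goals rw [interior_Icc] at ht
    · exact (hg t (Ioo_subset_Icc_self ht)).differentiableAt.differentiableWithinAt
    · rw [(hg t (Ioo_subset_Icc_self ht)).deriv]
      exact hg_nonneg t ht
  have h01 := hmono (left_mem_Icc.2 zero_le_one) (right_mem_Icc.2 zero_le_one) zero_le_one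
  simp only [g, c, zero_smul, add_zero, one_smul, add_sub_cancel] at h01
  simp only [bregmanDiv]
  linarith

end StrongConvexity

theorem apply_sub_le_bregmanDiv_of_isMinOn {Q : Set E} (hQ : Convex ℝ Q) {d : E → ℝ}
    {D : E → E →L[ℝ] ℝ} {y z x : E} (hd : HasFDerivAt d (D z) z) (ℓ : E →L[ℝ] ℝ)
    (hzQ : z ∈ Q) (hmin : IsMinOn (fun u => ℓ u + bregmanDiv d D y u) Q z) (hx : x ∈ Q) :
    ℓ (z - x) ≤ bregmanDiv d D y x - bregmanDiv d D z x - bregmanDiv d D y z := by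
  have hderiv : HasFDerivAt (fun u => ℓ u + bregmanDiv d D y u) (ℓ + (D z - D y)) z :=
    ℓ.hasFDerivAt.add (hasFDerivAt_bregmanDiv hd y)
  have hfoc : 0 ≤ (ℓ + (D z - D y)) (x - z) :=
    hmin.localize.hasFDerivWithinAt_nonneg hderiv.hasFDerivWithinAt
      (sub_mem_posTangentConeAt_of_segment_subset (hQ.segment_subset hzQ hx))
  rw [bregmanDiv_three_point, ← neg_sub x z, map_neg]
  simp only [add_apply, sub_apply, map_sub] at hfoc ⊢
  linarith

theorem mul_apply_le_half_sq_opNorm_add_half_sq_norm (p : E →L[ℝ] ℝ) (h : ℝ) (v : E) :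
    h * p v ≤ h ^ 2 / 2 * ‖p‖ ^ 2 + 1 / 2 * ‖v‖ ^ 2 := by
  have hbound : h * p v ≤ ‖h • p‖ * ‖v‖ := by
    simpa using le_trans (le_abs_self _) ((h • p).le_opNorm v)
  rw [norm_smul, Real.norm_eq_abs] at hbound
  nlinarith [sq_nonneg (|h| * ‖p‖ - ‖v‖), sq_abs h]

end Bregman

theorem mirror_descent_lemma_function_values_general {E : Type*} [NormedAddCommGroup E] [NormedSpace ℝ E]
    (Q : Set E) (hQ : Convex ℝ Q)
    (d : E → ℝ) (D : E → E →L[ℝ] ℝ)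
    (hdiff : ∀ w ∈ Q, HasFDerivAt d (D w) w)
    (hstr : ∀ u ∈ Q, ∀ v ∈ Q, ‖u - v‖^2 ≤ (D u - D v) (u - v))
    (V : E → E → ℝ) (hV : ∀ u v, V u v = d v - d u - D u (v - u))
    (f : E → ℝ)
    (y : E) (hy : y ∈ Q)
    (p : E →L[ℝ] ℝ) (hp : ∀ u ∈ Q, f y + p (u - y) ≤ f u)
    (h : ℝ) (hh : 0 < h)
    (z : E) (hzQ : z ∈ Q)
    (hz : ∀ u ∈ Q, h * p z + V y z ≤ h * p u + V y u) :
    ∀ x ∈ Q, h * (f y - f x) ≤ h^2 / 2 * ‖p‖^2 + V y x - V z x := by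
  intro x hx
  obtain rfl : V = bregmanDiv d D := funext₂ hV
  have hsubgrad : f y - f x ≤ p (y - x) := by
    have := hp x hx
    rw [← neg_sub y x, map_neg] at this
    linarith
  have hprox := apply_sub_le_bregmanDiv_of_isMinOn hQ (hdiff z hzQ) (h • p) hzQ
    (fun u hu => by simpa using hz u hu) hx
  have hstrong := mul_sq_norm_le_bregmanDiv hQ hdiff (μ := 1) (by simpa using hstr) hy hzQ
  have hyoung := mul_apply_le_half_sq_opNorm_add_half_sq_norm p h (y - z)
  calc h * (f y - f x) ≤ h * p (y - x) := mul_le_mul_of_nonneg_left hsubgrad hh.le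
    _ = h * p (y - z) + (h • p) (z - x) := by simp only [map_sub, smul_apply, smul_eq_mul]; ring
    _ ≤ h ^ 2 / 2 * ‖p‖ ^ 2 + bregmanDiv d D y x - bregmanDiv d D z x := by
      rw [norm_sub_rev] at hyoung
      linarith

theorem mirror_descent_lemma_function_values {E : Type*} [NormedAddCommGroup E] [NormedSpace ℝ E]
    [FiniteDimensional ℝ E]
    (Q : Set E) (hQc : IsClosed Q) (hQ : Convex ℝ Q)
    (d : E → ℝ) (D : E → E →L[ℝ] ℝ)
    (hdiff : ∀ w ∈ Q, HasFDerivAt d (D w) w)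
    (hstr : ∀ u ∈ Q, ∀ v ∈ Q, ‖u - v‖^2 ≤ (D u - D v) (u - v))
    (V : E → E → ℝ) (hV : ∀ u v, V u v = d v - d u - D u (v - u))
    (f : E → ℝ) (hf : ConvexOn ℝ Q f)
    (y : E) (hy : y ∈ Q)
    (p : E →L[ℝ] ℝ) (hp : ∀ u ∈ Q, f y + p (u - y) ≤ f u)
    (h : ℝ) (hh : 0 < h)
    (z : E) (hzQ : z ∈ Q)
    (hz : ∀ u ∈ Q, h * p z + V y z ≤ h * p u + V y u) :
    ∀ x ∈ Q, h * (f y - f x) ≤ h^2 / 2 * ‖p‖^2 + V y x - V z x :=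
  mirror_descent_lemma_function_values_general Q hQ d D hdiff hstr V hV f y hy p hp h hh z hzQ hz
end

section
/- Let $f_1, \dots, f_N, g$ be convex $M$-Lipschitz functions on a closed convex set $Q$, $x_* \in Q$ with $g(x_*) \leq 0$ and $d(x_*) \leq \Theta_0^2$. Suppose the adaptive algorithm produces productive steps (where $g(x^k) \leq \varepsilon$) with $M_k = \|\nabla f_{i(k)}(x^k)\|_*$ and non-productive steps (where $g(x^k) > \varepsilon$) with $M_k = \|\nabla g(x^k)\|_*$, stepsizes $h_k = \Theta_0(\sum_{t=0}^k M_t^2)^{-1/2}$, and updates $x^{k+1} = \mathrm{Mirr}_{x^k}(h_k q_k)$ with $q_k$ the corresponding subgradient. If $N$ productive and $N_J$ non-productive steps occur, then $\sum_{\text{productive } k}(f_{i(k)}(x^k) - f_{i(k)}(x_*)) < \varepsilon N - \varepsilon(N + N_J) + 2\Theta_0\left(\sum_{k=0}^{N+N_J-1} M_k^2\right)^{1/2}$. -/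
/-!
Each mirror step minimises `h_k q_k(·) + V(x_k, ·)` over `Q`; its first-order optimality
condition, the three-point identity for Bregman divergences and the 1-strong convexity of `d`
give `q_k(x_k - x_*) ≤ h_k M_k² / 2 + (V(x_k, x_*) - V(x_{k+1}, x_*)) / h_k`.
Summing, the weights `1 / h_k` increase, so the Bregman terms telescope to at most
`Θ² / h_{n-1} = Θ (∑ M_k²)^{1/2}`, while `∑ h_k M_k² < 2 Θ (∑ M_k²)^{1/2}` because
`a / √(s + a) < 2 (√(s + a) - √s)`. Finally, the subgradient inequalities bound the regret of a
productive step by `q_k(x_k - x_*)`, and give `q_k(x_k - x_*) ≥ g(x_k) - g(x_*) > ε` on a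
non-productive one.
-/

open Finset Set

noncomputable def bregman {E : Type*} [NormedAddCommGroup E] [NormedSpace ℝ E]
    (d : E → ℝ) (D : E → E →L[ℝ] ℝ) (u v : E) : ℝ :=
  d v - d u - D u (v - u)

section Bregman

variable {E : Type*} [NormedAddCommGroup E] [NormedSpace ℝ E]
  {Q : Set E} {d : E → ℝ} {D : E → E →L[ℝ] ℝ}

theorem bregman_sub_bregman_sub_bregman (x y u : E) :
    bregman d D x u - bregman d D y u - bregman d D x y = (D y - D x) (u - y) := by
  simp only [bregman, sub_apply]
  rw [show u - x = (u - y) + (y - x) by abel, map_add]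
  ring

theorem sq_norm_sub_div_two_le_bregman (hQ : Convex ℝ Q)
    (hdiff : ∀ w ∈ Q, HasFDerivAt d (D w) w)
    (hstr : ∀ u ∈ Q, ∀ v ∈ Q, ‖u - v‖ ^ 2 ≤ (D u - D v) (u - v))
    {u v : E} (hu : u ∈ Q) (hv : v ∈ Q) :
    ‖v - u‖ ^ 2 / 2 ≤ bregman d D u v := by
  set c := v - u
  have hmem : ∀ t ∈ Icc (0 : ℝ) 1, u + t • c ∈ Q := fun t ht => hQ.add_smul_sub_mem hu hv ht
  -- `ψ 1 - ψ 0` is the gap to be shown nonnegative, and `hstr` makes `ψ' ≥ 0` on `(0, 1)`.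
  set ψ : ℝ → ℝ := fun t => d (u + t • c) - t * D u c - t ^ 2 / 2 * ‖c‖ ^ 2
  set ψ' : ℝ → ℝ := fun t => (D (u + t • c) - D u) c - t * ‖c‖ ^ 2
  have hψ : ∀ t ∈ Icc (0 : ℝ) 1, HasDerivAt ψ (ψ' t) t := by
    intro t ht
    have hline : HasDerivAt (fun t : ℝ => u + t • c) c t := by
      simpa using ((hasDerivAt_id t).smul_const c).const_add u
    refine ((((hdiff _ (hmem t ht)).comp_hasDerivAt t hline).sub
      ((hasDerivAt_id t).mul_const (D u c))).sub
      (((hasDerivAt_pow 2 t).div_const 2).mul_const (‖c‖ ^ 2))).congr_deriv ?_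
    simp only [ψ', sub_apply, one_mul]
    norm_num
  have hψ'_nonneg : ∀ t ∈ Ioo (0 : ℝ) 1, 0 ≤ ψ' t := by
    intro t ht
    have h := hstr _ (hmem t (Ioo_subset_Icc_self ht)) u hu
    rw [add_sub_cancel_left, norm_smul, map_smul, smul_eq_mul, Real.norm_of_nonneg ht.1.le] at h
    nlinarith [ht.1]
  have hmono : MonotoneOn ψ (Icc 0 1) := by
    refine monotoneOn_of_hasDerivWithinAt_nonneg (f' := ψ') (convex_Icc 0 1)
      (fun t ht => (hψ t ht).continuousAt.continuousWithinAt) ?_ ?_ <;> rw [interior_Icc]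
    · exact fun t ht => (hψ t (Ioo_subset_Icc_self ht)).hasDerivWithinAt
    · exact hψ'_nonneg
  have h01 := hmono (left_mem_Icc.2 zero_le_one) (right_mem_Icc.2 zero_le_one) zero_le_one
  simp only [ψ, c, bregman, zero_smul, add_zero, one_smul, add_sub_cancel] at h01 ⊢
  linarith

theorem bregman_nonneg (hQ : Convex ℝ Q) (hdiff : ∀ w ∈ Q, HasFDerivAt d (D w) w)
    (hstr : ∀ u ∈ Q, ∀ v ∈ Q, ‖u - v‖ ^ 2 ≤ (D u - D v) (u - v))
    {u v : E} (hu : u ∈ Q) (hv : v ∈ Q) : 0 ≤ bregman d D u v :=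
  (by positivity : (0 : ℝ) ≤ _).trans (sq_norm_sub_div_two_le_bregman hQ hdiff hstr hu hv)

theorem bregman_three_point_le (hQ : Convex ℝ Q) (hdiff : ∀ w ∈ Q, HasFDerivAt d (D w) w)
    {p : E →L[ℝ] ℝ} {x y u : E} (hy : y ∈ Q) (hu : u ∈ Q)
    (hmin : ∀ w ∈ Q, p y + bregman d D x y ≤ p w + bregman d D x w) :
    p (y - u) ≤ bregman d D x u - bregman d D y u - bregman d D x y := by
  have hderiv : HasFDerivAt (fun w => p w + bregman d D x w) (p + (D y - D x)) y := by
    have := p.hasFDerivAt.add (((hdiff y hy).sub_const (d x)).sub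
      ((D x).hasFDerivAt.sub_const (D x x)))
    refine this.congr_of_eventuallyEq (Filter.Eventually.of_forall fun w => ?_)
    simp only [bregman, map_sub, Pi.add_apply, Pi.sub_apply]
  have hcone : u - y ∈ posTangentConeAt Q y :=
    sub_mem_posTangentConeAt_of_segment_subset (hQ.segment_subset hy hu)
  have := (isMinOn_iff.2 hmin).localize.hasFDerivWithinAt_nonneg hderiv.hasFDerivWithinAt hcone
  rw [bregman_sub_bregman_sub_bregman, ← neg_sub u y, map_neg]
  simp only [add_apply] at this
  linarith

theorem mirror_step_le (hQ : Convex ℝ Q) (hdiff : ∀ w ∈ Q, HasFDerivAt d (D w) w)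
    (hstr : ∀ u ∈ Q, ∀ v ∈ Q, ‖u - v‖ ^ 2 ≤ (D u - D v) (u - v))
    {q : E →L[ℝ] ℝ} {η : ℝ} {x y u : E} (hx : x ∈ Q) (hy : y ∈ Q) (hu : u ∈ Q)
    (hmin : ∀ w ∈ Q, η * q y + bregman d D x y ≤ η * q w + bregman d D x w) :
    η * q (x - u) ≤ η ^ 2 * ‖q‖ ^ 2 / 2 + bregman d D x u - bregman d D y u := by
  have hthree := bregman_three_point_le (p := η • q) hQ hdiff hy hu (by simpa using hmin)
  have hyoung : η * q (x - y) ≤ η ^ 2 * ‖q‖ ^ 2 / 2 + ‖y - x‖ ^ 2 / 2 := by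
    have hq : |q (x - y)| ≤ ‖q‖ * ‖y - x‖ := by
      simpa [norm_sub_rev] using q.le_opNorm (x - y)
    calc η * q (x - y) ≤ |η * q (x - y)| := le_abs_self _
      _ = |η| * |q (x - y)| := abs_mul _ _
      _ ≤ |η| * (‖q‖ * ‖y - x‖) := by gcongr
      _ ≤ η ^ 2 * ‖q‖ ^ 2 / 2 + ‖y - x‖ ^ 2 / 2 := by
          nlinarith [sq_nonneg (|η| * ‖q‖ - ‖y - x‖), sq_abs η]
  have hstrong := sq_norm_sub_div_two_le_bregman hQ hdiff hstr hx hy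
  have hsplit : q (x - u) = q (x - y) + q (y - u) := by rw [← map_add, sub_add_sub_cancel]
  simp only [smul_apply, smul_eq_mul] at hthree
  rw [hsplit]
  linarith

theorem mirror_step_apply_sub_le (hQ : Convex ℝ Q) (hdiff : ∀ w ∈ Q, HasFDerivAt d (D w) w)
    (hstr : ∀ u ∈ Q, ∀ v ∈ Q, ‖u - v‖ ^ 2 ≤ (D u - D v) (u - v))
    {q : E →L[ℝ] ℝ} {η : ℝ} (hη : 0 < η) {x y u : E} (hx : x ∈ Q) (hy : y ∈ Q) (hu : u ∈ Q)
    (hmin : ∀ w ∈ Q, η * q y + bregman d D x y ≤ η * q w + bregman d D x w) :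
    q (x - u) ≤ η * ‖q‖ ^ 2 / 2 + η⁻¹ * (bregman d D x u - bregman d D y u) := by
  have hscaled := mirror_step_le hQ hdiff hstr hx hy hu hmin
  have hη_mul : η * (η * ‖q‖ ^ 2 / 2 + η⁻¹ * (bregman d D x u - bregman d D y u))
      = η ^ 2 * ‖q‖ ^ 2 / 2 + (bregman d D x u - bregman d D y u) := by
    field_simp
  rw [← mul_le_mul_iff_of_pos_left hη, hη_mul]
  linarith

end Bregman

theorem div_sqrt_add_lt {s a : ℝ} (hs : 0 ≤ s) (ha : 0 < a) :
    a / √(s + a) < 2 * (√(s + a) - √s) := by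
  have hlt : √s < √(s + a) := Real.sqrt_lt_sqrt hs (by linarith)
  have hr : √(s + a) ^ 2 = s + a := Real.sq_sqrt (by linarith)
  have ht : √s ^ 2 = s := Real.sq_sqrt hs
  rw [div_lt_iff₀ (by linarith [Real.sqrt_nonneg s])]
  nlinarith [mul_pos (sub_pos.2 hlt) (sub_pos.2 hlt)]

theorem div_sqrt_add_le {s a : ℝ} (hs : 0 ≤ s) (ha : 0 ≤ a) :
    a / √(s + a) ≤ 2 * (√(s + a) - √s) := by
  rcases ha.eq_or_lt with rfl | ha
  · simp
  · exact (div_sqrt_add_lt hs ha).le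

theorem sum_range_div_sqrt_sum_lt {a : ℕ → ℝ} {n : ℕ} (ha : ∀ k, 0 ≤ a k) (hn : 0 < n)
    (ha₀ : 0 < a 0) :
    ∑ k ∈ range n, a k / √(∑ t ∈ range (k + 1), a t) < 2 * √(∑ k ∈ range n, a k) := by
  calc ∑ k ∈ range n, a k / √(∑ t ∈ range (k + 1), a t)
      < ∑ k ∈ range n, 2 * (√(∑ t ∈ range (k + 1), a t) - √(∑ t ∈ range k, a t)) := by
        refine sum_lt_sum (fun k _ => ?_) ⟨0, mem_range.2 hn, ?_⟩
        · rw [sum_range_succ]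
          exact div_sqrt_add_le (sum_nonneg fun t _ => ha t) (ha k)
        · simpa using div_sqrt_add_lt le_rfl ha₀
    _ = 2 * √(∑ k ∈ range n, a k) := by
        rw [← mul_sum, sum_range_sub (fun k => √(∑ t ∈ range k, a t))]
        simp

theorem sum_range_succ_mul_sub_succ_le {a b : ℕ → ℝ} {C : ℝ} (hb : Monotone b)
    (hb₀ : 0 ≤ b 0) :
    ∀ {n : ℕ}, (∀ k ≤ n, a k ≤ C) →
      ∑ k ∈ range (n + 1), b k * (a k - a (k + 1)) ≤ b n * (C - a (n + 1))
  | 0, haC => by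
    simpa using mul_le_mul_of_nonneg_left (by linarith [haC 0 le_rfl]) hb₀
  | n + 1, haC => by
    have ih := sum_range_succ_mul_sub_succ_le hb hb₀ (n := n) fun k hk => haC k (by omega)
    have hbC := mul_le_mul_of_nonneg_right (hb n.le_succ) (sub_nonneg.2 (haC (n + 1) le_rfl))
    rw [sum_range_succ]
    linarith

noncomputable def adaptiveStep (Θ : ℝ) (M : ℕ → ℝ) (k : ℕ) : ℝ :=
  Θ / √(∑ t ∈ range (k + 1), M t ^ 2)

section AdaptiveStep

variable {Θ : ℝ} {M : ℕ → ℝ}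

theorem adaptiveStep_pos (hΘ : 0 < Θ) (hM₀ : 0 < M 0) (k : ℕ) : 0 < adaptiveStep Θ M k := by
  refine div_pos hΘ (Real.sqrt_pos.2 (lt_of_lt_of_le (pow_pos hM₀ 2) ?_))
  exact single_le_sum (f := fun t => M t ^ 2) (fun t _ => sq_nonneg _) (mem_range.2 k.succ_pos)

theorem monotone_inv_adaptiveStep (hΘ : 0 ≤ Θ) : Monotone fun k => (adaptiveStep Θ M k)⁻¹ :=
  monotone_nat_of_le_succ fun k => by
    simp only [adaptiveStep, inv_div, sum_range_succ _ (k + 1)]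
    gcongr
    linarith [sq_nonneg (M (k + 1))]

theorem sum_adaptiveStep_mul_sq_lt (hΘ : 0 < Θ) {n : ℕ} (hn : 0 < n) (hM₀ : 0 < M 0) :
    ∑ k ∈ range n, adaptiveStep Θ M k * M k ^ 2 < 2 * Θ * √(∑ k ∈ range n, M k ^ 2) := by
  have hsum := sum_range_div_sqrt_sum_lt (fun k => sq_nonneg (M k)) hn (pow_pos hM₀ 2)
  calc ∑ k ∈ range n, adaptiveStep Θ M k * M k ^ 2
      = Θ * ∑ k ∈ range n, M k ^ 2 / √(∑ t ∈ range (k + 1), M t ^ 2) := by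
        rw [mul_sum]
        exact sum_congr rfl fun k _ => by rw [adaptiveStep]; ring
    _ < Θ * (2 * √(∑ k ∈ range n, M k ^ 2)) := mul_lt_mul_of_pos_left hsum hΘ
    _ = 2 * Θ * √(∑ k ∈ range n, M k ^ 2) := by ring

theorem sum_inv_adaptiveStep_mul_sub_le (hΘ : 0 < Θ) {V : ℕ → ℝ} {n : ℕ}
    (hV : ∀ k < n, V k ≤ Θ ^ 2) (hVn : 0 ≤ V n) :
    ∑ k ∈ range n, (adaptiveStep Θ M k)⁻¹ * (V k - V (k + 1))
      ≤ Θ * √(∑ k ∈ range n, M k ^ 2) := by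
  have hinv : ∀ k, (adaptiveStep Θ M k)⁻¹ = √(∑ t ∈ range (k + 1), M t ^ 2) / Θ :=
    fun k => inv_div _ _
  rcases n with _ | m
  · simp
  calc ∑ k ∈ range (m + 1), (adaptiveStep Θ M k)⁻¹ * (V k - V (k + 1))
      ≤ (adaptiveStep Θ M m)⁻¹ * (Θ ^ 2 - V (m + 1)) :=
        sum_range_succ_mul_sub_succ_le (monotone_inv_adaptiveStep hΘ.le)
          (by rw [hinv]; positivity) fun k hk => hV k (by omega)
    _ ≤ (adaptiveStep Θ M m)⁻¹ * Θ ^ 2 := by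
        rw [hinv]
        gcongr
        linarith
    _ = Θ * √(∑ k ∈ range (m + 1), M k ^ 2) := by
        rw [hinv]
        field_simp

end AdaptiveStep

section AdaptiveMirrorDescent

variable {E : Type*} [NormedAddCommGroup E] [NormedSpace ℝ E]
  {Q : Set E} {d : E → ℝ} {D : E → E →L[ℝ] ℝ}

theorem sub_le_apply_sub_of_add_apply_sub_le {φ : E → ℝ} {q : E →L[ℝ] ℝ} {x u : E}
    (h : φ x + q (u - x) ≤ φ u) : φ x - φ u ≤ q (x - u) := by
  rw [← neg_sub u x, map_neg]
  linarith

theorem adaptive_mirror_descent_linear_regret_lt (hQ : Convex ℝ Q)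
    (hdiff : ∀ w ∈ Q, HasFDerivAt d (D w) w)
    (hstr : ∀ u ∈ Q, ∀ v ∈ Q, ‖u - v‖ ^ 2 ≤ (D u - D v) (u - v))
    {Θ : ℝ} (hΘ : 0 < Θ) {n : ℕ} (hn : 0 < n) {x : ℕ → E} (hxQ : ∀ k, x k ∈ Q)
    {xs : E} (hxs : xs ∈ Q) (hV : ∀ k ≤ n, bregman d D (x k) xs ≤ Θ ^ 2)
    {q : ℕ → E →L[ℝ] ℝ} {M : ℕ → ℝ} (hM : ∀ k < n, M k = ‖q k‖) (hM₀ : 0 < M 0)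
    {h : ℕ → ℝ} (hh : ∀ k, h k = Θ / √(∑ t ∈ range (k + 1), M t ^ 2))
    (hstep : ∀ k < n, ∀ u ∈ Q, h k * q k (x (k + 1)) + bregman d D (x k) (x (k + 1))
      ≤ h k * q k u + bregman d D (x k) u) :
    ∑ k ∈ range n, q k (x k - xs) < 2 * Θ * √(∑ k ∈ range n, M k ^ 2) := by
  obtain rfl : h = adaptiveStep Θ M := funext hh
  set V : ℕ → ℝ := fun k => bregman d D (x k) xs
  have hper_step : ∀ k < n, q k (x k - xs)
      ≤ adaptiveStep Θ M k * M k ^ 2 / 2 + (adaptiveStep Θ M k)⁻¹ * (V k - V (k + 1)) :=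
    fun k hk => by
      simpa only [hM k hk] using mirror_step_apply_sub_le hQ hdiff hstr
        (adaptiveStep_pos hΘ hM₀ k) (hxQ k) (hxQ (k + 1)) hxs (hstep k hk)
  have hsteps := sum_adaptiveStep_mul_sq_lt hΘ hn hM₀
  have htelescope := sum_inv_adaptiveStep_mul_sub_le (M := M) hΘ (fun k hk => hV k hk.le)
    (bregman_nonneg hQ hdiff hstr (hxQ n) hxs)
  calc ∑ k ∈ range n, q k (x k - xs)
      ≤ ∑ k ∈ range n, (adaptiveStep Θ M k * M k ^ 2 / 2
          + (adaptiveStep Θ M k)⁻¹ * (V k - V (k + 1))) :=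
        sum_le_sum fun k hk => hper_step k (mem_range.1 hk)
    _ = (∑ k ∈ range n, adaptiveStep Θ M k * M k ^ 2) / 2
          + ∑ k ∈ range n, (adaptiveStep Θ M k)⁻¹ * (V k - V (k + 1)) := by
        rw [sum_add_distrib, sum_div]
    _ < 2 * Θ * √(∑ k ∈ range n, M k ^ 2) := by linarith

end AdaptiveMirrorDescent

theorem adaptive_online_MD_regret_general {E : Type*} [NormedAddCommGroup E] [NormedSpace ℝ E]
    (Q : Set E) (hQ : Convex ℝ Q)
    (d : E → ℝ) (D : E → E →L[ℝ] ℝ)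
    (hdiff : ∀ w ∈ Q, HasFDerivAt d (D w) w)
    (hstr : ∀ u ∈ Q, ∀ v ∈ Q, ‖u - v‖^2 ≤ (D u - D v) (u - v))
    (V : E → E → ℝ) (hV : ∀ u v, V u v = d v - d u - D u (v - u))
    (N NJ : ℕ) (hN : 0 < N)
    (ε Θ : ℝ) (hΘ : 0 < Θ)
    (f : Fin N → E → ℝ) (g : E → ℝ)
    (xs : E) (hxs : xs ∈ Q) (hgxs : g xs ≤ 0)
    (x : ℕ → E) (hxQ : ∀ k, x k ∈ Q)
    (hVb : ∀ k ≤ N + NJ, V (x k) xs ≤ Θ^2)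
    (prodSet : Finset ℕ)
    (hprod : ∀ k, k ∈ prodSet ↔ (k < N + NJ ∧ g (x k) ≤ ε))
    (hcard : prodSet.card = N)
    (idx : ℕ → Fin N)
    (q : ℕ → E →L[ℝ] ℝ)
    (hq_prod : ∀ k ∈ prodSet, ∀ u ∈ Q, f (idx k) (x k) + q k (u - x k) ≤ f (idx k) u)
    (hq_nonprod : ∀ k < N + NJ, k ∉ prodSet → ∀ u ∈ Q, g (x k) + q k (u - x k) ≤ g u)
    (Mk : ℕ → ℝ) (hMk : ∀ k < N + NJ, Mk k = ‖q k‖)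
    (hMkpos : ∀ k < N + NJ, 0 < Mk k)
    (h : ℕ → ℝ)
    (hh : ∀ k, h k = Θ / Real.sqrt (∑ t ∈ Finset.range (k+1), (Mk t)^2))
    (hstep : ∀ k < N + NJ, ∀ u ∈ Q,
      h k * q k (x (k+1)) + V (x k) (x (k+1)) ≤ h k * q k u + V (x k) u) :
    ∑ k ∈ prodSet, (f (idx k) (x k) - f (idx k) xs)
      < ε * N - ε * (N + NJ)
        + 2 * Θ * Real.sqrt (∑ k ∈ Finset.range (N + NJ), (Mk k)^2) := by
  obtain rfl : V = bregman d D := funext fun u => funext (hV u)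
  have hsub : prodSet ⊆ range (N + NJ) := fun k hk => mem_range.2 ((hprod k).1 hk).1
  have hlinear := adaptive_mirror_descent_linear_regret_lt hQ hdiff hstr hΘ (by omega) hxQ hxs hVb
    hMk (hMkpos 0 (by omega)) hh hstep
  rw [← sum_sdiff hsub] at hlinear
  have hproductive : ∑ k ∈ prodSet, (f (idx k) (x k) - f (idx k) xs)
      ≤ ∑ k ∈ prodSet, q k (x k - xs) :=
    sum_le_sum fun k hk => sub_le_apply_sub_of_add_apply_sub_le (hq_prod k hk xs hxs)
  have hnonproductive : ε * NJ ≤ ∑ k ∈ range (N + NJ) \ prodSet, q k (x k - xs) := by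
    have hcard' : #(range (N + NJ) \ prodSet) = NJ := by
      rw [card_sdiff_of_subset hsub, card_range, hcard]
      omega
    have hcount := card_nsmul_le_sum _ (fun k => q k (x k - xs)) ε fun k hk => by
      obtain ⟨hk, hkp⟩ := mem_sdiff.1 hk
      have hgk : ε < g (x k) := not_le.1 fun hle => hkp ((hprod k).2 ⟨mem_range.1 hk, hle⟩)
      have hsubgrad :=
        sub_le_apply_sub_of_add_apply_sub_le (hq_nonprod k (mem_range.1 hk) hkp xs hxs)
      linarith
    rwa [hcard', nsmul_eq_mul, mul_comm] at hcount
  linarith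

theorem adaptive_online_MD_regret {E : Type*} [NormedAddCommGroup E] [NormedSpace ℝ E]
    [FiniteDimensional ℝ E]
    (Q : Set E) (hQc : IsClosed Q) (hQ : Convex ℝ Q)
    (d : E → ℝ) (D : E → E →L[ℝ] ℝ)
    (hdiff : ∀ w ∈ Q, HasFDerivAt d (D w) w)
    (hstr : ∀ u ∈ Q, ∀ v ∈ Q, ‖u - v‖^2 ≤ (D u - D v) (u - v))
    (V : E → E → ℝ) (hV : ∀ u v, V u v = d v - d u - D u (v - u))
    (N NJ : ℕ) (hN : 0 < N)
    (M ε Θ : ℝ) (hM : 0 < M) (hε : 0 < ε) (hΘ : 0 < Θ)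
    (f : Fin N → E → ℝ) (g : E → ℝ)
    (hfconv : ∀ i, ConvexOn ℝ Q (f i)) (hgconv : ConvexOn ℝ Q g)
    (hflip : ∀ i, ∀ u ∈ Q, ∀ v ∈ Q, |f i u - f i v| ≤ M * ‖u - v‖)
    (hglip : ∀ u ∈ Q, ∀ v ∈ Q, |g u - g v| ≤ M * ‖u - v‖)
    (xs : E) (hxs : xs ∈ Q) (hgxs : g xs ≤ 0) (hdxs : d xs ≤ Θ^2)
    (x : ℕ → E) (hxQ : ∀ k, x k ∈ Q)
    (hVb : ∀ k ≤ N + NJ, V (x k) xs ≤ Θ^2)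
    (prodSet : Finset ℕ)
    (hprod : ∀ k, k ∈ prodSet ↔ (k < N + NJ ∧ g (x k) ≤ ε))
    (hcard : prodSet.card = N)
    (idx : ℕ → Fin N) (hidx : Set.BijOn idx ↑prodSet Set.univ)
    (q : ℕ → E →L[ℝ] ℝ)
    (hq_prod : ∀ k ∈ prodSet, ∀ u ∈ Q, f (idx k) (x k) + q k (u - x k) ≤ f (idx k) u)
    (hq_nonprod : ∀ k < N + NJ, k ∉ prodSet → ∀ u ∈ Q, g (x k) + q k (u - x k) ≤ g u)
    (Mk : ℕ → ℝ) (hMk : ∀ k < N + NJ, Mk k = ‖q k‖)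
    (hMkpos : ∀ k < N + NJ, 0 < Mk k)
    (h : ℕ → ℝ)
    (hh : ∀ k, h k = Θ / Real.sqrt (∑ t ∈ Finset.range (k+1), (Mk t)^2))
    (hstep : ∀ k < N + NJ, ∀ u ∈ Q,
      h k * q k (x (k+1)) + V (x k) (x (k+1)) ≤ h k * q k u + V (x k) u) :
    ∑ k ∈ prodSet, (f (idx k) (x k) - f (idx k) xs)
      < ε * N - ε * (N + NJ)
        + 2 * Θ * Real.sqrt (∑ k ∈ Finset.range (N + NJ), (Mk k)^2) :=
  adaptive_online_MD_regret_general Q hQ d D hdiff hstr V hV N NJ hN ε Θ hΘ f g xs hxs hgxs x hxQ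
    hVb prodSet hprod hcard idx q hq_prod hq_nonprod Mk hMk hMkpos h hh hstep
end
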